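/- Let U₀, V₀ > 0, K ≥ 1 integer, Λ(x,λ)=erf((x-0.5-λ)/√(2λ)). Define F(ξ_R, ξ_FC) = (1/4)[3 - Λ(ξ_FC,V₀) - (1+Λ(ξ_FC,V₀))·Λ(ξ_R,U₀)]. Then 0 ≤ F ≤ 1, F is nonincreasing in ξ_R and in ξ_FC, and ξ_R ↦ F^K is convex on {ξ_R ≥ U₀+0.5} for fixed ξ_FC, and ξ_FC ↦ F^K is convex on {ξ_FC ≥ V₀+0.5} for fixed ξ_R. -/

import Mathlib

/-!
Both `Λ(·, U₀)` and `Λ(·, V₀)` are nondecreasing with values in `[-1, 1]`, and concave above the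
point where the argument of `erf` vanishes, since `erf' z = (2/√π) e^{-z²}` decreases for `z ≥ 0`.
The polynomial `F = (3 - a - b - ab)/4` is symmetric in `a = Λ(ξ_R, U₀)` and `b = Λ(ξ_FC, V₀)`
and, for fixed `b ≥ -1`, affine and nonincreasing in `a`; so `F` is a nonnegative convex function
of either threshold there, and so is its `K`-th power.
-/

/-- The Gauss error function `erf z = (2/√π) ∫_0^z e^{-t²} dt`. -/
noncomputable def erf (z : ℝ) : ℝ := (2 / Real.sqrt Real.pi) * ∫ t in (0:ℝ)..z, Real.exp (-t ^ 2)

/-- `Λ(x,λ)`: the Gaussian (continuity-corrected) approximation of the Poisson CDF. -/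
noncomputable def Lam (x lam : ℝ) : ℝ := erf ((x - 0.5 - lam) / Real.sqrt (2 * lam))

/-- Upper bound `P̃⁺_fa` on the end-to-end false-alarm probability. -/
noncomputable def F (U₀ V₀ ξR ξFC : ℝ) : ℝ :=
  (1 / 4) * (3 - Lam ξFC V₀ - (1 + Lam ξFC V₀) * Lam ξR U₀)

open Real MeasureTheory Set

lemma continuous_exp_neg_sq : Continuous fun t : ℝ => exp (-t ^ 2) := by fun_prop

lemma hasDerivAt_erf (z : ℝ) : HasDerivAt erf (2 / √π * exp (-z ^ 2)) z :=
  (intervalIntegral.integral_hasDerivAt_right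
    (continuous_exp_neg_sq.intervalIntegrable 0 z)
    (continuous_exp_neg_sq.stronglyMeasurableAtFilter _ _)
    continuous_exp_neg_sq.continuousAt).const_mul _

lemma deriv_erf : deriv erf = fun z => 2 / √π * exp (-z ^ 2) :=
  funext fun z => (hasDerivAt_erf z).deriv

lemma differentiable_erf : Differentiable ℝ erf := fun z => (hasDerivAt_erf z).differentiableAt

lemma monotone_erf : Monotone erf :=
  monotone_of_deriv_nonneg differentiable_erf fun z => by rw [deriv_erf]; positivity

lemma erf_zero : erf 0 = 0 := by simp [erf]

lemma erf_neg (z : ℝ) : erf (-z) = -erf z := by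
  unfold erf
  rw [← mul_neg, ← intervalIntegral.integral_symm]
  congr 1
  have h := intervalIntegral.integral_comp_neg (a := 0) (b := -z) fun t => exp (-t ^ 2)
  simp only [neg_sq, neg_neg, neg_zero] at h
  exact h

lemma erf_le_one (z : ℝ) : erf z ≤ 1 := by
  rcases le_or_gt 0 z with hz | hz
  · have h_integrable : IntegrableOn (fun t : ℝ => exp (-t ^ 2)) (Ioi 0) := by
      simpa using (integrable_exp_neg_mul_sq one_pos).integrableOn
    have h_half : ∫ t in (0 : ℝ)..z, exp (-t ^ 2) ≤ √π / 2 := by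
      calc ∫ t in (0 : ℝ)..z, exp (-t ^ 2)
          ≤ ∫ t in Ioi (0 : ℝ), exp (-t ^ 2) := by
            rw [intervalIntegral.integral_of_le hz]
            exact setIntegral_mono_set h_integrable (.of_forall fun t => (exp_pos _).le)
              Ioc_subset_Ioi_self.eventuallyLE
        _ = √π / 2 := by simpa using integral_gaussian_Ioi 1
    have hπ : 0 < √π := sqrt_pos.2 pi_pos
    calc erf z ≤ 2 / √π * (√π / 2) := mul_le_mul_of_nonneg_left h_half (by positivity)
      _ = 1 := by field_simp
  · linarith [erf_zero ▸ monotone_erf hz.le]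

lemma neg_one_le_erf (z : ℝ) : -1 ≤ erf z := by
  linarith [erf_neg z ▸ erf_le_one (-z)]

lemma concaveOn_erf : ConcaveOn ℝ (Ici 0) erf := by
  refine AntitoneOn.concaveOn_of_deriv (convex_Ici 0) differentiable_erf.continuous.continuousOn
    differentiable_erf.differentiableOn ?_
  rw [deriv_erf, interior_Ici]
  intro x hx y hy hxy
  have hsq : x ^ 2 ≤ y ^ 2 := pow_le_pow_left₀ (le_of_lt hx) hxy 2
  dsimp only
  gcongr

lemma ConcaveOn.comp_sub_div {f : ℝ → ℝ} (hf : ConcaveOn ℝ (Ici 0) f) (a : ℝ) {s : ℝ}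
    (hs : 0 ≤ s) : ConcaveOn ℝ (Ici a) fun x => f ((x - a) / s) := by
  let g : ℝ →ᵃ[ℝ] ℝ :=
    { toFun := fun x => (x - a) / s
      linear := s⁻¹ • LinearMap.id
      map_vadd' := fun p v => by
        simp only [vadd_eq_add, LinearMap.smul_apply, LinearMap.id_coe, id_eq, smul_eq_mul]; ring }
  exact (hf.comp_affineMap g).subset (fun x hx => div_nonneg (sub_nonneg.2 hx) hs) (convex_Ici a)

lemma Lam_mem_Icc (x lam : ℝ) : Lam x lam ∈ Icc (-1) 1 :=
  ⟨neg_one_le_erf _, erf_le_one _⟩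

lemma monotone_Lam (lam : ℝ) : Monotone fun x => Lam x lam := fun _ _ hxy =>
  monotone_erf (div_le_div_of_nonneg_right (by linarith) (sqrt_nonneg _))

lemma concaveOn_Lam (lam : ℝ) : ConcaveOn ℝ (Ici (lam + 0.5)) fun x => Lam x lam := by
  simpa only [Lam, sub_sub, add_comm lam] using
    concaveOn_erf.comp_sub_div (lam + 0.5) (sqrt_nonneg (2 * lam))

/-- `F U₀ V₀ ξR ξFC` is, by definition, `falseAlarmPoly (Lam ξR U₀) (Lam ξFC V₀)`. -/
noncomputable def falseAlarmPoly (a b : ℝ) : ℝ := (1 / 4) * (3 - b - (1 + b) * a)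

lemma falseAlarmPoly_comm (a b : ℝ) : falseAlarmPoly a b = falseAlarmPoly b a := by
  unfold falseAlarmPoly; ring

lemma falseAlarmPoly_mem_Icc {a b : ℝ} (ha : a ∈ Icc (-1) 1) (hb : b ∈ Icc (-1) 1) :
    falseAlarmPoly a b ∈ Icc 0 1 := by
  obtain ⟨ha₁, ha₂⟩ := ha
  obtain ⟨hb₁, hb₂⟩ := hb
  unfold falseAlarmPoly
  constructor
  · nlinarith [mul_nonneg (sub_nonneg.2 hb₂) (sub_nonneg.2 ha₂)]
  · nlinarith [mul_nonneg (by linarith : (0 : ℝ) ≤ 1 + b) (by linarith : (0 : ℝ) ≤ 1 + a)]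

lemma Monotone.antitone_falseAlarmPoly {g : ℝ → ℝ} (hg : Monotone g) {b : ℝ} (hb : -1 ≤ b) :
    Antitone fun x => falseAlarmPoly (g x) b := fun x y hxy => by
  have : 0 ≤ 1 + b := by linarith
  dsimp only [falseAlarmPoly]
  gcongr
  exact hg hxy

lemma ConcaveOn.convexOn_falseAlarmPoly_pow {s : Set ℝ} {g : ℝ → ℝ} (hg : ConcaveOn ℝ s g)
    (hg_mem : ∀ x ∈ s, g x ∈ Icc (-1) 1) {b : ℝ} (hb : b ∈ Icc (-1) 1) (K : ℕ) :
    ConvexOn ℝ s fun x => falseAlarmPoly (g x) b ^ K := by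
  have hconv : ConvexOn ℝ s fun x => falseAlarmPoly (g x) b := by
    refine ((hg.smul (c := (1 + b) / 4) (by linarith [hb.1])).neg.add_const ((3 - b) / 4)).congr
      fun x _ => ?_
    simp only [falseAlarmPoly, Pi.add_apply, Pi.neg_apply, smul_eq_mul]
    ring
  exact hconv.pow (fun x hx => (falseAlarmPoly_mem_Icc (hg_mem x hx) hb).1) K

lemma F_comm (U₀ V₀ ξR ξFC : ℝ) : F U₀ V₀ ξR ξFC = F V₀ U₀ ξFC ξR :=
  falseAlarmPoly_comm _ _

lemma F_mem_Icc (U₀ V₀ ξR ξFC : ℝ) : F U₀ V₀ ξR ξFC ∈ Icc 0 1 :=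
  falseAlarmPoly_mem_Icc (Lam_mem_Icc _ _) (Lam_mem_Icc _ _)

lemma antitone_F_left (U₀ V₀ ξFC : ℝ) : Antitone fun ξR => F U₀ V₀ ξR ξFC :=
  (monotone_Lam U₀).antitone_falseAlarmPoly (Lam_mem_Icc ξFC V₀).1

lemma convexOn_F_left_pow (U₀ V₀ ξFC : ℝ) (K : ℕ) :
    ConvexOn ℝ (Ici (U₀ + 0.5)) fun ξR => F U₀ V₀ ξR ξFC ^ K :=
  (concaveOn_Lam U₀).convexOn_falseAlarmPoly_pow (fun _ _ => Lam_mem_Icc _ _)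
    (Lam_mem_Icc ξFC V₀) K

theorem Pfa_upper_bound_properties_general (U₀ V₀ : ℝ) (K : ℕ) :
    (∀ ξR ξFC : ℝ, 0 ≤ F U₀ V₀ ξR ξFC ∧ F U₀ V₀ ξR ξFC ≤ 1) ∧
    (∀ ξFC : ℝ, Antitone (fun ξR => F U₀ V₀ ξR ξFC)) ∧
    (∀ ξR : ℝ, Antitone (fun ξFC => F U₀ V₀ ξR ξFC)) ∧
    (∀ ξFC : ℝ, ConvexOn ℝ (Set.Ici (U₀ + 0.5)) (fun ξR => F U₀ V₀ ξR ξFC ^ K)) ∧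
    (∀ ξR : ℝ, ConvexOn ℝ (Set.Ici (V₀ + 0.5)) (fun ξFC => F U₀ V₀ ξR ξFC ^ K)) := by
  refine ⟨fun ξR ξFC => F_mem_Icc U₀ V₀ ξR ξFC, antitone_F_left U₀ V₀, fun ξR => ?_,
    fun ξFC => convexOn_F_left_pow U₀ V₀ ξFC K, fun ξR => ?_⟩
  · simpa only [F_comm V₀ U₀] using antitone_F_left V₀ U₀ ξR
  · simpa only [F_comm V₀ U₀] using convexOn_F_left_pow V₀ U₀ ξR K

theorem Pfa_upper_bound_properties (U₀ V₀ : ℝ) (hU : 0 < U₀) (hV : 0 < V₀)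
    (K : ℕ) (hK : 1 ≤ K) :
    (∀ ξR ξFC : ℝ, 0 ≤ F U₀ V₀ ξR ξFC ∧ F U₀ V₀ ξR ξFC ≤ 1) ∧
    (∀ ξFC : ℝ, Antitone (fun ξR => F U₀ V₀ ξR ξFC)) ∧
    (∀ ξR : ℝ, Antitone (fun ξFC => F U₀ V₀ ξR ξFC)) ∧
    (∀ ξFC : ℝ, ConvexOn ℝ (Set.Ici (U₀ + 0.5)) (fun ξR => F U₀ V₀ ξR ξFC ^ K)) ∧
    (∀ ξR : ℝ, ConvexOn ℝ (Set.Ici (V₀ + 0.5)) (fun ξFC => F U₀ V₀ ξR ξFC ^ K)) :=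
  Pfa_upper_bound_properties_general U₀ V₀ K
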